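/- arXiv:2405.05934 — 2 statements merged into one kernel-verified Lean document; each statement's English description precedes it below -/
import Mathlib

section
/- Fix p ∈ ℕ, group means μ^{(y,d)} ∈ ℝ^p for (y,d) ∈ {0,1} × {S,T} satisfying μ^{(1,S)} − μ^{(0,S)} = μ^{(1,T)} − μ^{(0,T)}, with Δ_D := μ^{(1,S)} − μ^{(0,S)}, Δ_C := μ^{(0,S)} − μ^{(0,T)}, and let Σ ∈ ℝ^{p×p} be symmetric positive definite. For each group let ν^{(y,d)} be a Borel probability measure on ℝ^p with mean μ^{(y,d)} and covariance Σ. Let μ_Λ be a Borel probability measure on ℝ supported in [0,1] with ∫ λ dμ_Λ = 1/2, and set s := ∫ λ² dμ_Λ. For y ∈ {0,1} let ρ_y be the pushforward of the product measure ν^{(y,S)} ⊗ ν^{(y,T)} ⊗ μ_Λ under the map (x₁, x₂, λ) ↦ λx₁ + (1 − λ)x₂. Then the intra-class domain mixup risk R_MU(w,b) := (1/2) ∫ (0 − ⟨w,x⟩ − b)² dρ₀(x) + (1/2) ∫ (1 − ⟨w,x⟩ − b)² dρ₁(x) has the unique minimizer w*_MU = (1/4)(2s·Σ + (s − 1/4)·Δ_C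 Δ_Cᵀ + (1/4) Δ_D Δ_Dᵀ)⁻¹ Δ_D and b*_MU = 1/2 − (1/2)⟨w*_MU, μ^{(0,T)} + μ^{(1,S)}⟩. -/
/-!
Write `d = c - b`. Since `d = λd + (1 - λ)d`, the mixup loss is
`(λ(d - ⟨w, x₁⟩) + (1 - λ)(d - ⟨w, x₂⟩))²`, and independence of `x₁`, `x₂`, `λ` reduces its
expectation to moments: if `x₁`, `x₂` have means `m₁`, `m₂` and covariance `Σ`, then with
`E λ = 1/2` and `E λ² = E (1 - λ)² = s` it equals
`2s wᵀΣw + s(d - ⟨w, m₁⟩)² + s(d - ⟨w, m₂⟩)² + (1 - 2s)(d - ⟨w, m₁⟩)(d - ⟨w, m₂⟩)`.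
Averaging the two classes and completing the square in `b` gives
`R(w, b) = wᵀAw - 2⟨w, Δ_D / 4⟩ + (b - β(w))² + 1/4` with
`β(w) = 1/2 - ⟨w, μ^{(0,T)} + μ^{(1,S)}⟩ / 2` and `A = 2sΣ + (s - 1/4)Δ_CΔ_Cᵀ + (1/4)Δ_DΔ_Dᵀ`,
which is positive definite because `s - 1/4 = Var Λ ≥ 0`. Hence the unique minimiser is
`A w* = Δ_D / 4`, `b* = β(w*)`.
-/

open MeasureTheory ProbabilityTheory Matrix
open scoped ENNReal

lemma sq_integral_le_integral_sq {Ω : Type*} [MeasurableSpace Ω] {μ : Measure Ω}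
    [IsProbabilityMeasure μ] {X : Ω → ℝ} (hX : MemLp X 2 μ) :
    (∫ ω, X ω ∂μ) ^ 2 ≤ ∫ ω, X ω ^ 2 ∂μ := by
  have hvar := variance_nonneg X μ
  rw [variance_eq_sub hX] at hvar
  simp only [Pi.pow_apply] at hvar
  linarith

section LinearFunctionals

variable {n : Type*} [Fintype n] {ν : Measure (n → ℝ)}

lemma memLp_dotProduct {p : ℝ≥0∞} (hν : MemLp id p ν) (w : n → ℝ) :
    MemLp (fun x => w ⬝ᵥ x) p ν :=
  memLp_finsetSum _ fun i _ => (hν.eval i).const_mul (w i)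

lemma integral_dotProduct (hν : Integrable id ν) {m : n → ℝ} (hm : ∀ i, ∫ x, x i ∂ν = m i)
    (w : n → ℝ) : ∫ x, w ⬝ᵥ x ∂ν = w ⬝ᵥ m := by
  have hcoord : ∀ i, Integrable (fun x : n → ℝ => x i) ν := hν.eval
  simp only [dotProduct]
  rw [integral_finsetSum _ fun i _ => (hcoord i).const_mul (w i)]
  simp only [integral_const_mul, hm]

lemma integral_dotProduct_sub_sq [IsFiniteMeasure ν] (hν : MemLp id 2 ν) {m : n → ℝ}
    {S : Matrix n n ℝ} (hS : ∀ i j, ∫ x, (x i - m i) * (x j - m j) ∂ν = S i j) (w : n → ℝ) :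
    ∫ x, (w ⬝ᵥ (x - m)) ^ 2 ∂ν = w ⬝ᵥ S *ᵥ w := by
  have hcentred : ∀ i j, Integrable (fun x : n → ℝ => (x i - m i) * (x j - m j)) ν :=
    fun i j => ((hν.eval i).sub (memLp_const (m i))).integrable_mul
      ((hν.eval j).sub (memLp_const (m j)))
  have hexpand : ∀ x : n → ℝ, (w ⬝ᵥ (x - m)) ^ 2 =
      ∑ i, ∑ j, w i * w j * ((x i - m i) * (x j - m j)) := fun x => by
    simp only [dotProduct, sq, Finset.sum_mul_sum, Pi.sub_apply]
    exact Finset.sum_congr rfl fun i _ => Finset.sum_congr rfl fun j _ => by ring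
  simp_rw [hexpand]
  rw [integral_finsetSum _ fun i _ => integrable_finsetSum _ fun j _ => (hcentred i j).const_mul _]
  simp_rw [integral_finsetSum _ fun j _ => (hcentred _ j).const_mul _]
  simp only [integral_const_mul, hS, dotProduct, mulVec, Finset.mul_sum]
  exact Finset.sum_congr rfl fun i _ => Finset.sum_congr rfl fun j _ => by ring

lemma integral_sub_dotProduct_sq [IsProbabilityMeasure ν] (hν : MemLp id 2 ν) {m : n → ℝ}
    (hm : ∀ i, ∫ x, x i ∂ν = m i) {S : Matrix n n ℝ}
    (hS : ∀ i j, ∫ x, (x i - m i) * (x j - m j) ∂ν = S i j) (d : ℝ) (w : n → ℝ) :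
    ∫ x, (d - w ⬝ᵥ x) ^ 2 ∂ν = w ⬝ᵥ S *ᵥ w + (d - w ⬝ᵥ m) ^ 2 := by
  set e := d - w ⬝ᵥ m
  have hw := (memLp_dotProduct hν w).integrable one_le_two
  have hwc : Integrable (fun x => (w ⬝ᵥ (x - m)) ^ 2) ν := by
    simpa only [dotProduct_sub, Pi.sub_apply] using
      ((memLp_dotProduct hν w).sub (memLp_const _)).integrable_sq
  have hexpand : ∀ x : n → ℝ, (d - w ⬝ᵥ x) ^ 2 =
      (w ⬝ᵥ (x - m)) ^ 2 - 2 * e * (w ⬝ᵥ x) + (e ^ 2 + 2 * e * (w ⬝ᵥ m)) := fun x => by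
    rw [dotProduct_sub]; ring
  rw [integral_congr_ae (ae_of_all _ hexpand),
    integral_add (by exact hwc.sub (hw.const_mul _)) (integrable_const _),
    integral_sub hwc (hw.const_mul _), integral_const_mul, integral_dotProduct_sub_sq hν hS,
    integral_dotProduct (hν.integrable one_le_two) hm, integral_const, probReal_univ, one_smul]
  ring

end LinearFunctionals

section Mixing

variable {α β : Type*} [MeasurableSpace α] [MeasurableSpace β] {μ : Measure α} {ν : Measure β}
  {κ : Measure ℝ} [IsProbabilityMeasure μ] [IsProbabilityMeasure ν] [IsProbabilityMeasure κ]

lemma integral_prod_prod_mul (f : α → ℝ) (g : β → ℝ) (h : ℝ → ℝ) :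
    ∫ q, f q.1 * (g q.2.1 * h q.2.2) ∂(μ.prod (ν.prod κ)) =
      (∫ x, f x ∂μ) * ((∫ y, g y ∂ν) * ∫ l, h l ∂κ) := by
  rw [integral_prod_mul f (fun y : β × ℝ => g y.1 * h y.2), integral_prod_mul]

lemma integral_mix_sq {f : α → ℝ} {g : β → ℝ} (hf : MemLp f 2 μ) (hg : MemLp g 2 ν)
    (hκ : MemLp id 2 κ) :
    ∫ q, (q.2.2 * f q.1 + (1 - q.2.2) * g q.2.1) ^ 2 ∂(μ.prod (ν.prod κ)) =
      (∫ x, f x ^ 2 ∂μ) * (∫ l, l ^ 2 ∂κ) + (∫ y, g y ^ 2 ∂ν) * (∫ l, (1 - l) ^ 2 ∂κ)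
        + 2 * (∫ x, f x ∂μ) * (∫ y, g y ∂ν) * ∫ l, l * (1 - l) ∂κ := by
  have hκ' : MemLp (fun l : ℝ => 1 - l) 2 κ := (memLp_const 1).sub hκ
  have hexpand : ∀ q : α × β × ℝ, (q.2.2 * f q.1 + (1 - q.2.2) * g q.2.1) ^ 2 =
      f q.1 ^ 2 * (1 * q.2.2 ^ 2) + (1 * (g q.2.1 ^ 2 * (1 - q.2.2) ^ 2)
        + 2 * f q.1 * (g q.2.1 * (q.2.2 * (1 - q.2.2)))) := fun q => by ring
  have I₁ := hf.integrable_sq.mul_prod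
    ((integrable_const (μ := ν) (1 : ℝ)).mul_prod hκ.integrable_sq)
  have I₂ := (integrable_const (μ := μ) (1 : ℝ)).mul_prod
    (hg.integrable_sq.mul_prod hκ'.integrable_sq)
  have I₃ := ((hf.integrable one_le_two).const_mul 2).mul_prod
    ((hg.integrable one_le_two).mul_prod (hκ.integrable_mul hκ'))
  rw [integral_congr_ae (ae_of_all _ hexpand), integral_add (by exact I₁) (by exact I₂.add I₃),
    integral_add (by exact I₂) (by exact I₃),
    integral_prod_prod_mul (fun x => f x ^ 2) (fun _ => 1) (fun l => l ^ 2),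
    integral_prod_prod_mul (fun _ => 1) (fun y => g y ^ 2) (fun l => (1 - l) ^ 2),
    integral_prod_prod_mul (fun x => 2 * f x) g (fun l => l * (1 - l)), integral_const_mul]
  simp only [integral_const, probReal_univ, smul_eq_mul, mul_one, one_mul]
  ring

end Mixing

lemma integral_mixup_sub_dotProduct_sq {n : Type*} [Fintype n] {νa νb : Measure (n → ℝ)}
    [IsProbabilityMeasure νa] [IsProbabilityMeasure νb] {κ : Measure ℝ} [IsProbabilityMeasure κ]
    (ha : MemLp id 2 νa) (hb : MemLp id 2 νb) {ma mb : n → ℝ}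
    (hma : ∀ i, ∫ x, x i ∂νa = ma i) (hmb : ∀ i, ∫ x, x i ∂νb = mb i) {S : Matrix n n ℝ}
    (hSa : ∀ i j, ∫ x, (x i - ma i) * (x j - ma j) ∂νa = S i j)
    (hSb : ∀ i j, ∫ x, (x i - mb i) * (x j - mb j) ∂νb = S i j)
    (hκ : MemLp id 2 κ) (hκmean : ∫ l, l ∂κ = 1 / 2) {s : ℝ} (hs : ∫ l, l ^ 2 ∂κ = s)
    (d : ℝ) (w : n → ℝ) :
    ∫ x, (d - w ⬝ᵥ x) ^ 2
        ∂(Measure.map (fun q : (n → ℝ) × (n → ℝ) × ℝ => q.2.2 • q.1 + (1 - q.2.2) • q.2.1)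
          (νa.prod (νb.prod κ))) =
      2 * s * (w ⬝ᵥ S *ᵥ w) + s * (d - w ⬝ᵥ ma) ^ 2 + s * (d - w ⬝ᵥ mb) ^ 2
        + (1 - 2 * s) * (d - w ⬝ᵥ ma) * (d - w ⬝ᵥ mb) := by
  have hκ₁ : Integrable (fun l : ℝ => l) κ := hκ.integrable one_le_two
  have hκ₂ : Integrable (fun l : ℝ => l ^ 2) κ := hκ.integrable_sq
  have hmix : Measurable fun q : (n → ℝ) × (n → ℝ) × ℝ => q.2.2 • q.1 + (1 - q.2.2) • q.2.1 := by
    fun_prop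
  have hloss : Continuous fun x : n → ℝ => (d - w ⬝ᵥ x) ^ 2 := by
    simp only [dotProduct]; fun_prop
  have hsplit : ∀ q : (n → ℝ) × (n → ℝ) × ℝ, (d - w ⬝ᵥ (q.2.2 • q.1 + (1 - q.2.2) • q.2.1)) ^ 2 =
      (q.2.2 * (d - w ⬝ᵥ q.1) + (1 - q.2.2) * (d - w ⬝ᵥ q.2.1)) ^ 2 := fun q => by
    simp only [dotProduct_add, dotProduct_smul, smul_eq_mul]; ring
  have hloss_memLp : ∀ {ν : Measure (n → ℝ)} [IsProbabilityMeasure ν], MemLp id 2 ν →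
      MemLp (fun x => d - w ⬝ᵥ x) 2 ν :=
    fun hν => (memLp_const d).sub (memLp_dotProduct hν w)
  have hloss_integral : ∀ {ν : Measure (n → ℝ)} [IsProbabilityMeasure ν] {m : n → ℝ},
      MemLp id 2 ν → (∀ i, ∫ x, x i ∂ν = m i) → ∫ x, (d - w ⬝ᵥ x) ∂ν = d - w ⬝ᵥ m :=
    fun hν hm => by
      rw [integral_sub (integrable_const d) ((memLp_dotProduct hν w).integrable one_le_two),
        integral_dotProduct (hν.integrable one_le_two) hm, integral_const, probReal_univ, one_smul]
  have hcompl_sq : ∫ l, (1 - l) ^ 2 ∂κ = s := by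
    have hexpand : ∀ l : ℝ, (1 - l) ^ 2 = 1 - 2 * l + l ^ 2 := fun l => by ring
    rw [integral_congr_ae (ae_of_all _ hexpand),
      integral_add (by exact (integrable_const 1).sub (hκ₁.const_mul 2)) hκ₂,
      integral_sub (integrable_const 1) (hκ₁.const_mul 2), integral_const_mul]
    simp [hκmean, hs]
  have hcompl_mul : ∫ l, l * (1 - l) ∂κ = 1 / 2 - s := by
    have hexpand : ∀ l : ℝ, l * (1 - l) = l - l ^ 2 := fun l => by ring
    rw [integral_congr_ae (ae_of_all _ hexpand), integral_sub hκ₁ hκ₂, hκmean, hs]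
  rw [integral_map hmix.aemeasurable hloss.aestronglyMeasurable,
    integral_congr_ae (ae_of_all _ hsplit),
    integral_mix_sq (hloss_memLp ha) (hloss_memLp hb) hκ,
    integral_sub_dotProduct_sq ha hma hSa, integral_sub_dotProduct_sq hb hmb hSb,
    hloss_integral ha hma, hloss_integral hb hmb, hs, hcompl_sq, hcompl_mul]
  ring

lemma Matrix.dotProduct_vecMulVec_mulVec {n R : Type*} [Fintype n] [CommSemiring R]
    (x u v y : n → R) : x ⬝ᵥ vecMulVec u v *ᵥ y = (x ⬝ᵥ u) * (v ⬝ᵥ y) := by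
  rw [vecMulVec_mulVec, op_smul_eq_smul, dotProduct_smul, smul_eq_mul, mul_comm]

lemma Matrix.posSemidef_smul_vecMulVec_self {n : Type*} [Fintype n] {a : ℝ} (ha : 0 ≤ a)
    (u : n → ℝ) : (a • vecMulVec u u).PosSemidef := by
  simpa only [star_trivial] using (posSemidef_vecMulVec_self_star u).smul ha

lemma Matrix.IsSymm.dotProduct_mulVec_sub_two_mul {n R : Type*} [Fintype n] [CommRing R]
    {A : Matrix n n R} (hA : A.IsSymm) {v w₀ : n → R} (hw₀ : A *ᵥ w₀ = v) (w : n → R) :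
    w ⬝ᵥ A *ᵥ w - 2 * (w ⬝ᵥ v) = (w - w₀) ⬝ᵥ A *ᵥ (w - w₀) - w₀ ⬝ᵥ A *ᵥ w₀ := by
  subst hw₀
  have hswap : w₀ ⬝ᵥ A *ᵥ w = w ⬝ᵥ A *ᵥ w₀ := by
    rw [dotProduct_mulVec, ← mulVec_transpose, hA.eq, dotProduct_comm]
  rw [mulVec_sub, dotProduct_sub, sub_dotProduct, sub_dotProduct, hswap]
  ring

theorem Matrix.PosDef.isMin_and_unique_of_quadratic_add_sq {n : Type*} [Fintype n]
    {A : Matrix n n ℝ} (hA : A.PosDef) {v w₀ : n → ℝ} (hw₀ : A *ᵥ w₀ = v)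
    (β : (n → ℝ) → ℝ) (c : ℝ) {F : (n → ℝ) → ℝ → ℝ}
    (hF : ∀ w b, F w b = w ⬝ᵥ A *ᵥ w - 2 * (w ⬝ᵥ v) + (b - β w) ^ 2 + c) :
    (∀ w b, F w₀ (β w₀) ≤ F w b) ∧ (∀ w b, F w b = F w₀ (β w₀) → w = w₀ ∧ b = β w₀) := by
  have hsplit : ∀ w b, F w b = F w₀ (β w₀) + (w - w₀) ⬝ᵥ A *ᵥ (w - w₀) + (b - β w) ^ 2 := by
    intro w b
    have hsymm := (isHermitian_iff_isSymm.mp hA.isHermitian)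
    rw [hF, hF, hsymm.dotProduct_mulVec_sub_two_mul hw₀, hsymm.dotProduct_mulVec_sub_two_mul hw₀]
    simp only [sub_self, zero_dotProduct]
    ring
  have hnonneg : ∀ x, 0 ≤ x ⬝ᵥ A *ᵥ x := by
    simpa only [star_trivial] using hA.posSemidef.dotProduct_mulVec_nonneg
  refine ⟨fun w b => ?_, fun w b heq => ?_⟩
  · rw [hsplit w b]
    linarith [hnonneg (w - w₀), sq_nonneg (b - β w)]
  · have hw : w = w₀ := by
      by_contra hne
      have hpos := hA.dotProduct_mulVec_pos (sub_ne_zero.mpr hne)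
      rw [star_trivial] at hpos
      linarith [hsplit w b, sq_nonneg (b - β w)]
    subst hw
    refine ⟨rfl, ?_⟩
    rw [hsplit, sub_self, zero_dotProduct] at heq
    exact sub_eq_zero.mp (pow_eq_zero_iff two_ne_zero |>.mp (by linarith))

/-- Theorem 2, mixup part: intra-class domain mixup replaces each class-`y`
representation by `λx₁ + (1−λ)x₂` with `x₁ ~ ν^{(y,S)}`, `x₂ ~ ν^{(y,T)}` independent and
`λ ~ μ_Λ` supported in `[0,1]` with mean `1/2`; with `s = E[λ²]`, the mixup risk
`R_MU(w,b) = (1/2)∫(0 − ⟨w,x⟩ − b)² dρ₀ + (1/2)∫(1 − ⟨w,x⟩ − b)² dρ₁` has the unique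
minimizer `w*_MU = (1/4)(2sΣ + (s − 1/4)Δ_CΔ_Cᵀ + (1/4)Δ_DΔ_Dᵀ)⁻¹Δ_D`,
`b*_MU = 1/2 − (1/2)⟨w*_MU, μ^{(0,T)} + μ^{(1,S)}⟩`. -/
theorem mixup_optimal_model
    (p : ℕ) (μ0S μ0T μ1S μ1T : Fin p → ℝ)
    (hmean : μ1S - μ0S = μ1T - μ0T)
    (ΔD ΔC : Fin p → ℝ)
    (hΔD : ΔD = μ1S - μ0S) (hΔC : ΔC = μ0S - μ0T)
    (S : Matrix (Fin p) (Fin p) ℝ) (hS : S.PosDef)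
    (ν0S ν0T ν1S ν1T : Measure (Fin p → ℝ))
    [IsProbabilityMeasure ν0S] [IsProbabilityMeasure ν0T]
    [IsProbabilityMeasure ν1S] [IsProbabilityMeasure ν1T]
    (hint : ∀ ν ∈ [ν0S, ν0T, ν1S, ν1T], Integrable (fun x => ‖x‖ ^ 2) ν)
    (hmeans : (∀ i, (∫ x, x i ∂ν0S) = μ0S i) ∧ (∀ i, (∫ x, x i ∂ν0T) = μ0T i) ∧
              (∀ i, (∫ x, x i ∂ν1S) = μ1S i) ∧ (∀ i, (∫ x, x i ∂ν1T) = μ1T i))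
    (hcovs : (∀ i j, (∫ x, (x i - μ0S i) * (x j - μ0S j) ∂ν0S) = S i j) ∧
             (∀ i j, (∫ x, (x i - μ0T i) * (x j - μ0T j) ∂ν0T) = S i j) ∧
             (∀ i j, (∫ x, (x i - μ1S i) * (x j - μ1S j) ∂ν1S) = S i j) ∧
             (∀ i j, (∫ x, (x i - μ1T i) * (x j - μ1T j) ∂ν1T) = S i j))
    (μΛ : Measure ℝ) [IsProbabilityMeasure μΛ]
    (hsupp : ∀ᵐ l ∂μΛ, l ∈ Set.Icc (0 : ℝ) 1)
    (hΛmean : ∫ l, l ∂μΛ = 1/2)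
    (s : ℝ) (hs : s = ∫ l, l ^ 2 ∂μΛ)
    (ρ0 ρ1 : Measure (Fin p → ℝ))
    (hρ0 : ρ0 = Measure.map
      (fun q : (Fin p → ℝ) × (Fin p → ℝ) × ℝ => q.2.2 • q.1 + (1 - q.2.2) • q.2.1)
      (ν0S.prod (ν0T.prod μΛ)))
    (hρ1 : ρ1 = Measure.map
      (fun q : (Fin p → ℝ) × (Fin p → ℝ) × ℝ => q.2.2 • q.1 + (1 - q.2.2) • q.2.1)
      (ν1S.prod (ν1T.prod μΛ)))
    (R : (Fin p → ℝ) → ℝ → ℝ)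
    (hR : ∀ w b, R w b = (1/2 : ℝ) * (∫ x, ((0 : ℝ) - w ⬝ᵥ x - b) ^ 2 ∂ρ0)
        + (1/2 : ℝ) * (∫ x, ((1 : ℝ) - w ⬝ᵥ x - b) ^ 2 ∂ρ1))
    (wstar : Fin p → ℝ)
    (hwstar : wstar = (1/4 : ℝ) •
      (((2 * s) • S + (s - 1/4) • vecMulVec ΔC ΔC + (1/4 : ℝ) • vecMulVec ΔD ΔD)⁻¹ *ᵥ ΔD))
    (bstar : ℝ) (hbstar : bstar = 1/2 - (1/2 : ℝ) * (wstar ⬝ᵥ (μ0T + μ1S))) :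
    (∀ w b, R wstar bstar ≤ R w b) ∧
    (∀ w b, R w b = R wstar bstar → w = wstar ∧ b = bstar) := by
  obtain ⟨hm0S, hm0T, hm1S, hm1T⟩ := hmeans
  obtain ⟨hS0S, hS0T, hS1S, hS1T⟩ := hcovs
  have hL2 : ∀ ν ∈ [ν0S, ν0T, ν1S, ν1T], MemLp id 2 ν := fun ν hν =>
    (memLp_two_iff_integrable_sq_norm aestronglyMeasurable_id).mpr (hint ν hν)
  have hΛ : MemLp id 2 μΛ := memLp_of_bounded hsupp aestronglyMeasurable_id 2
  have hs_ge : 1 / 4 ≤ s := by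
    have hjensen := sq_integral_le_integral_sq hΛ
    simp only [id, hΛmean, ← hs] at hjensen
    linarith
  set A := (2 * s) • S + (s - 1/4) • vecMulVec ΔC ΔC + (1/4 : ℝ) • vecMulVec ΔD ΔD with hA
  have hApos : A.PosDef :=
    ((hS.smul (by linarith : (0 : ℝ) < 2 * s)).add_posSemidef
      (posSemidef_smul_vecMulVec_self (by linarith) ΔC)).add_posSemidef
      (posSemidef_smul_vecMulVec_self (by norm_num) ΔD)
  have hAw : A *ᵥ wstar = (1/4 : ℝ) • ΔD := by
    rw [hwstar, mulVec_smul, mulVec_mulVec, mul_nonsing_inv A hApos.det_pos.ne'.isUnit, one_mulVec]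
  have hRquad : ∀ w b, R w b = w ⬝ᵥ A *ᵥ w - 2 * (w ⬝ᵥ (1/4 : ℝ) • ΔD)
      + (b - (1/2 - (1/2 : ℝ) * (w ⬝ᵥ (μ0T + μ1S)))) ^ 2 + 1/4 := by
    intro w b
    have hA_quad : w ⬝ᵥ A *ᵥ w = 2 * s * (w ⬝ᵥ S *ᵥ w) + (s - 1/4) * (w ⬝ᵥ ΔC) ^ 2
        + 1/4 * (w ⬝ᵥ ΔD) ^ 2 := by
      simp only [hA, add_mulVec, smul_mulVec, dotProduct_add, dotProduct_smul, smul_eq_mul,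
        dotProduct_vecMulVec_mulVec, dotProduct_comm ΔC w, dotProduct_comm ΔD w]
      ring
    have h1T : w ⬝ᵥ μ1T = w ⬝ᵥ μ1S - w ⬝ᵥ μ0S + w ⬝ᵥ μ0T := by
      rw [show μ1T = μ1S - μ0S + μ0T by rw [hmean]; abel, dotProduct_add, dotProduct_sub]
    rw [hR, hρ0, hρ1]
    simp_rw [sub_right_comm _ _ b]
    rw [integral_mixup_sub_dotProduct_sq (hL2 ν0S (by simp)) (hL2 ν0T (by simp)) hm0S hm0T
        hS0S hS0T hΛ hΛmean hs.symm,
      integral_mixup_sub_dotProduct_sq (hL2 ν1S (by simp)) (hL2 ν1T (by simp)) hm1S hm1T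
        hS1S hS1T hΛ hΛmean hs.symm, hA_quad, h1T, hΔC, hΔD]
    simp only [dotProduct_add, dotProduct_sub, dotProduct_smul, smul_eq_mul]
    ring
  subst hbstar
  exact hApos.isMin_and_unique_of_quadratic_add_sq hAw _ _ hRquad
end

section
/- Let Σ ∈ ℝ^{p×p} be symmetric positive definite and Δ_C, Δ_D ∈ ℝ^p with Δ_Cᵀ Σ⁻¹ Δ_D = 0. Then for any α > 0 and t ≥ 0, there exists γ > 0 such that (α·Σ + t·Δ_C Δ_Cᵀ + (1/4)·Δ_D Δ_Dᵀ)⁻¹ Δ_D = γ · Σ⁻¹ Δ_D. -/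
/-!
Because `Δ_C` is `Σ⁻¹`-orthogonal to `Δ_D`, the rank-one term `t Δ_C Δ_Cᵀ` annihilates
`Σ⁻¹ Δ_D`, so `M = α Σ + t Δ_C Δ_Cᵀ + ¼ Δ_D Δ_Dᵀ` maps `Σ⁻¹ Δ_D` to `(α + ¼ Δ_Dᵀ Σ⁻¹ Δ_D) Δ_D`.
The factor is positive and `M` is positive definite, hence invertible, so
`γ = (α + ¼ Δ_Dᵀ Σ⁻¹ Δ_D)⁻¹`.
-/

open Matrix

variable {n : Type*} [Fintype n]

theorem Matrix.perturbed_mulVec_inv_mulVec [DecidableEq n] {R : Type*} [CommRing R]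
    {S : Matrix n n R} (hS : IsUnit S.det) {c d : n → R} (horth : c ⬝ᵥ (S⁻¹ *ᵥ d) = 0) (α t s : R) :
    (α • S + t • vecMulVec c c + s • vecMulVec d d) *ᵥ (S⁻¹ *ᵥ d)
      = (α + s * (d ⬝ᵥ (S⁻¹ *ᵥ d))) • d := by
  have hSS : S *ᵥ (S⁻¹ *ᵥ d) = d := by rw [mulVec_mulVec, mul_nonsing_inv _ hS, one_mulVec]
  simp only [add_mulVec, smul_mulVec, vecMulVec_mulVec, hSS, horth, op_smul_eq_smul, zero_smul,
    smul_zero, add_zero, add_smul, smul_smul]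

theorem Matrix.PosDef.add_smul_vecMulVec_self {S : Matrix n n ℝ} (hS : S.PosDef) {t : ℝ}
    (ht : 0 ≤ t) (c : n → ℝ) : (S + t • vecMulVec c c).PosDef := by
  simpa using hS.add_posSemidef ((posSemidef_vecMulVec_self_star c).smul ht)

/-- under the orthogonality assumption `Δ_Cᵀ Σ⁻¹ Δ_D = 0` (Assumption 4), for any
`α > 0` and `t ≥ 0` the vector `(α·Σ + t·Δ_CΔ_Cᵀ + (1/4)·Δ_DΔ_Dᵀ)⁻¹ Δ_D` is a positive multiple
of `Σ⁻¹ Δ_D`. -/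
theorem inv_perturbed_apply_proportional
    (p : ℕ) (S : Matrix (Fin p) (Fin p) ℝ) (hS : S.PosDef)
    (ΔC ΔD : Fin p → ℝ)
    (horth : ΔC ⬝ᵥ (S⁻¹ *ᵥ ΔD) = 0)
    (α t : ℝ) (hα : 0 < α) (ht : 0 ≤ t) :
    ∃ γ : ℝ, 0 < γ ∧
      (α • S + t • vecMulVec ΔC ΔC + (1/4 : ℝ) • vecMulVec ΔD ΔD)⁻¹ *ᵥ ΔD
        = γ • (S⁻¹ *ᵥ ΔD) := by
  have hd : 0 ≤ ΔD ⬝ᵥ (S⁻¹ *ᵥ ΔD) := by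
    simpa using hS.inv.posSemidef.dotProduct_mulVec_nonneg ΔD
  have hM : (α • S + t • vecMulVec ΔC ΔC + (1/4 : ℝ) • vecMulVec ΔD ΔD).PosDef :=
    ((hS.smul hα).add_smul_vecMulVec_self ht ΔC).add_smul_vecMulVec_self (by norm_num) ΔD
  have hγ : 0 < α + 1/4 * (ΔD ⬝ᵥ (S⁻¹ *ᵥ ΔD)) := by positivity
  refine ⟨(α + 1/4 * (ΔD ⬝ᵥ (S⁻¹ *ᵥ ΔD)))⁻¹, inv_pos.2 hγ, ?_⟩
  have := hM.isUnit.invertible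
  refine inv_mulVec_eq_vec ?_
  rw [mulVec_smul, perturbed_mulVec_inv_mulVec (isUnit_iff_isUnit_det _ |>.1 hS.isUnit) horth,
    smul_smul, inv_mul_cancel₀ hγ.ne', one_smul]
end
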